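/- arXiv:2507.22682 — 11 statements merged into one kernel-verified Lean document; each statement's English description precedes it below -/
import Mathlib

section
/- If M is a maximal sublattice of a finite lattice L and the complement C = L \ M has more than one element, then no element of C is doubly irreducible (simultaneously join-irreducible and meet-irreducible). -/
variable {L : Type*}

/-- `M` is a maximal sublattice of `L`: a proper sublattice such that the only
proper sublattice containing it is itself. -/
def IsMaxSublattice [Lattice L] (M : Set L) : Prop :=
  IsSublattice M ∧ M ≠ Set.univ ∧
    ∀ S : Set L, IsSublattice S → M ⊆ S → S ≠ Set.univ → S = M

theorem stmt1 [Lattice L] [Fintype L] (M : Set L) (hM : IsMaxSublattice M)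
    (hC : 1 < (Mᶜ : Set L).ncard) :
    ∀ a ∈ Mᶜ, ¬(SupIrred a ∧ InfIrred a) := by
  rintro a ha ⟨hsup, hinf⟩
  have hS : IsSublattice ({a}ᶜ : Set L) := by
    constructor
    · intro x hx y hy h
      simp only [Set.mem_compl_iff, Set.mem_singleton_iff] at *
      rcases hsup.2 h with h' | h' <;> [exact hx h'; exact hy h']
    · intro x hx y hy h
      simp only [Set.mem_compl_iff, Set.mem_singleton_iff] at *
      rcases hinf.2 h with h' | h' <;> [exact hx h'; exact hy h']
  have hsub : M ⊆ ({a}ᶜ : Set L) := by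
    intro x hx hxa
    exact ha (Set.mem_singleton_iff.mp hxa ▸ hx)
  have hne : ({a}ᶜ : Set L) ≠ Set.univ := by
    intro h
    have : a ∈ ({a}ᶜ : Set L) := h ▸ Set.mem_univ a
    exact this rfl
  have := hM.2.2 _ hS hsub hne
  have hMc : (Mᶜ : Set L) = {a} := by rw [← this, compl_compl]
  rw [hMc, Set.ncard_singleton] at hC
  exact lt_irrefl 1 hC
end

section
/- If S is a (0,1)-sublattice of a finite lattice L and a is a maximal element of the complement C = L \ S, then a is meet-irreducible; dually, every minimal element of C is join-irreducible. -/
variable {L : Type*}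

theorem stmt2 [Lattice L] [Fintype L] [BoundedOrder L] (S : Set L)
    (hS : IsSublattice S) (h0 : ⊥ ∈ S) (h1 : ⊤ ∈ S) :
    (∀ a ∈ Sᶜ, (∀ b ∈ Sᶜ, a ≤ b → b = a) → InfIrred a) ∧
    (∀ a ∈ Sᶜ, (∀ b ∈ Sᶜ, b ≤ a → b = a) → SupIrred a) := by
  constructor
  · intro a ha hmax
    constructor
    · intro hm
      exact ha (top_le_iff.mp (hm le_top) ▸ h1)
    · intro b c hbc
      by_contra h
      push_neg at h
      obtain ⟨hb, hc⟩ := h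
      have hbS : b ∈ S := by
        by_contra hb'
        exact hb (hmax b hb' (hbc ▸ inf_le_left))
      have hcS : c ∈ S := by
        by_contra hc'
        exact hc (hmax c hc' (hbc ▸ inf_le_right))
      exact ha (hbc ▸ hS.infClosed hbS hcS)
  · intro a ha hmin
    constructor
    · intro hm
      exact ha (le_bot_iff.mp (hm bot_le) ▸ h0)
    · intro b c hbc
      by_contra h
      push_neg at h
      obtain ⟨hb, hc⟩ := h
      have hbS : b ∈ S := by
        by_contra hb'
        exact hb (hmin b hb' (hbc ▸ le_sup_left))
      have hcS : c ∈ S := by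
        by_contra hc'
        exact hc (hmin c hc' (hbc ▸ le_sup_right))
      exact ha (hbc ▸ hS.supClosed hbS hcS)
end

section
/- If M is a maximal sublattice of a finite lattice L with complement C = L \ M, then C cannot be partitioned into two nonempty sets C₁ and C₂ such that no element of C₁ is comparable to any element of C₂. -/
variable {L : Type*}

theorem stmt3 [Lattice L] [Fintype L] (M : Set L) (hM : IsMaxSublattice M) :
    ¬ ∃ C₁ C₂ : Set L, C₁.Nonempty ∧ C₂.Nonempty ∧ C₁ ∪ C₂ = Mᶜ ∧
      Disjoint C₁ C₂ ∧ ∀ x ∈ C₁, ∀ y ∈ C₂, ¬(x ≤ y ∨ y ≤ x) := by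
  rintro ⟨C₁, C₂, ⟨c1, hc1⟩, ⟨c2, hc2⟩, hU, hdisj, hcomp⟩
  obtain ⟨⟨hsup, hinf⟩, -, hmax⟩ := hM
  -- any element of C₂ is not in M
  have hC2M : ∀ y ∈ C₂, y ∉ M := fun y hy hyM => by
    have : y ∈ Mᶜ := hU ▸ Set.mem_union_right _ hy
    exact this hyM
  have hC1M : ∀ y ∈ C₁, y ∉ M := fun y hy hyM => by
    have : y ∈ Mᶜ := hU ▸ Set.mem_union_left _ hy
    exact this hyM
  set S : Set L := M ∪ C₁ with hS
  have mem_of : ∀ {a b z : L}, a ∈ S → b ∈ S → a ≤ z ∨ z ≤ a → b ≤ z ∨ z ≤ b →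
      (a ∈ M → b ∈ M → z ∈ M) → z ∈ S := by
    intro a b z ha hb haz hbz hMM
    by_contra hz
    have hzM : z ∉ M := fun h => hz (Set.mem_union_left _ h)
    have hzC1 : z ∉ C₁ := fun h => hz (Set.mem_union_right _ h)
    have hzC2 : z ∈ C₂ := by
      have : z ∈ C₁ ∪ C₂ := hU ▸ hzM
      exact this.resolve_left hzC1
    have haM : a ∈ M := ha.resolve_right fun h => hcomp a h z hzC2 haz
    have hbM : b ∈ M := hb.resolve_right fun h => hcomp b h z hzC2 hbz
    exact hzM (hMM haM hbM)
  have hSsub : IsSublattice S := by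
    constructor
    · intro a ha b hb
      exact mem_of ha hb (Or.inl le_sup_left) (Or.inl le_sup_right)
        (fun h1 h2 => hsup h1 h2)
    · intro a ha b hb
      exact mem_of ha hb (Or.inr inf_le_left) (Or.inr inf_le_right)
        (fun h1 h2 => hinf h1 h2)
  have hSne : S ≠ Set.univ := by
    intro h
    have : c2 ∈ S := h ▸ Set.mem_univ c2
    rcases this with h' | h'
    · exact hC2M c2 hc2 h'
    · exact (Set.disjoint_right.mp hdisj hc2) h'
  have := hmax S hSsub (Set.subset_union_left) hSne
  exact hC1M c1 hc1 (this ▸ Set.mem_union_right M hc1)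
end

section
/- Let M be a maximal sublattice of a finite lattice L with complement C = L \ M, and suppose C has a unique minimal element c₀. Let m₀ = ⋀{m ∈ M : m > c₀}. Then C ∩ [m₀, 1] = ∅ and C is a convex subset of L. -/
variable {L : Type*}

theorem stmt5 [Lattice L] [Fintype L] [BoundedOrder L] (M : Set L)
    (hM : IsMaxSublattice M)
    (c₀ : L) (hc₀ : c₀ ∈ Mᶜ) (hmin : ∀ b ∈ Mᶜ, b ≤ c₀ → b = c₀)
    (huniq : ∀ c ∈ Mᶜ, (∀ b ∈ Mᶜ, b ≤ c → b = c) → c = c₀)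
    (m₀ : L) (hne : {m | m ∈ M ∧ c₀ < m}.Nonempty)
    (hm₀ : IsGLB {m | m ∈ M ∧ c₀ < m} m₀) :
    Mᶜ ∩ Set.Icc m₀ ⊤ = ∅ ∧
      ∀ a ∈ Mᶜ, ∀ b ∈ Mᶜ, ∀ d, a ≤ d → d ≤ b → d ∈ Mᶜ := by
  -- every element of the complement is above c₀
  have hAbove : ∀ c ∈ Mᶜ, c₀ ≤ c := by
    intro c hc
    obtain ⟨b, hb, hbmin⟩ := Set.Finite.exists_minimal (s := {x ∈ Mᶜ | x ≤ c})
      (Set.toFinite _) ⟨c, hc, le_rfl⟩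
    have hb' : b = c₀ := huniq b hb.1 (fun y hy hyb =>
      le_antisymm hyb (hbmin ⟨hy, hyb.trans hb.2⟩ hyb))
    exact hb' ▸ hb.2
  -- m₀ is the inf of a finite nonempty subset of M, hence in M
  classical
  set T : Set L := {m | m ∈ M ∧ c₀ < m} with hT
  have hTfin : T.Finite := Set.toFinite _
  obtain ⟨t, ht⟩ : ∃ t : Finset L, (t : Set L) = T := ⟨hTfin.toFinset, hTfin.coe_toFinset⟩
  have htne : t.Nonempty := by
    obtain ⟨x, hx⟩ := hne
    exact ⟨x, by rw [← ht] at hx; exact_mod_cast hx⟩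
  have hglb2 : IsGLB T (t.inf' htne id) := by
    constructor
    · intro x hx
      exact Finset.inf'_le id (by rw [← ht] at hx; exact_mod_cast hx)
    · intro y hy
      exact Finset.le_inf' htne id (fun x hx => hy (by rw [← ht]; exact_mod_cast hx))
  have hm₀eq : m₀ = t.inf' htne id := hm₀.unique hglb2
  have hm₀M : m₀ ∈ M := by
    rw [hm₀eq]
    exact Finset.inf'_mem M (fun x hx y hy => hM.1.infClosed hx hy) _ _ id
      (fun i hi => ((by rw [← ht] at *; exact_mod_cast hi : i ∈ T)).1)
  have hc₀m₀ : c₀ < m₀ := lt_of_le_of_ne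
    (hm₀.2 fun x hx => (hx.2 : c₀ < x).le)
    (fun h => hc₀ (h ▸ hm₀M))
  -- Part 1
  have part1 : Mᶜ ∩ Set.Icc m₀ ⊤ = ∅ := by
    by_contra h
    obtain ⟨c, hcC, hcm₀, -⟩ := Set.nonempty_iff_ne_empty.2 h
    -- the sublattice M ∪ [m₀, ⊤]
    set S : Set L := M ∪ {x | m₀ ≤ x} with hS
    have hSsub : IsSublattice S := by
      constructor
      · rintro x (hx | hx) y (hy | hy)
        · exact Or.inl (hM.1.supClosed hx hy)
        · exact Or.inr (le_sup_of_le_right hy)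
        · exact Or.inr (le_sup_of_le_left hx)
        · exact Or.inr (le_sup_of_le_left hx)
      · rintro x (hx | hx) y (hy | hy)
        · exact Or.inl (hM.1.infClosed hx hy)
        · by_cases hxy : x ⊓ y ∈ M
          · exact Or.inl hxy
          · refine Or.inr (le_inf ?_ hy)
            have hcx : c₀ ≤ x := le_trans (hAbove _ hxy) inf_le_left
            exact hm₀.1 ⟨hx, lt_of_le_of_ne hcx (fun h => hc₀ (h ▸ hx))⟩
        · by_cases hxy : x ⊓ y ∈ M
          · exact Or.inl hxy
          · refine Or.inr (le_inf hx ?_)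
            have hcy : c₀ ≤ y := le_trans (hAbove _ hxy) inf_le_right
            exact hm₀.1 ⟨hy, lt_of_le_of_ne hcy (fun h => hc₀ (h ▸ hy))⟩
        · exact Or.inr (le_inf hx hy)
    have hSne : S ≠ Set.univ := by
      intro h
      have : c₀ ∈ S := h ▸ Set.mem_univ c₀
      rcases this with h' | h'
      · exact hc₀ h'
      · exact absurd h' (not_le_of_gt hc₀m₀)
    have := hM.2.2 S hSsub Set.subset_union_left hSne
    exact hcC (this ▸ Or.inr hcm₀ : c ∈ M)
  -- Part 2
  refine ⟨part1, fun a ha b hb d had hdb => ?_⟩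
  by_contra hdM
  rw [Set.notMem_compl_iff] at hdM
  have hcd : c₀ < d :=
    lt_of_le_of_ne (le_trans (hAbove a ha) had) (fun h => hc₀ (h ▸ hdM))
  have : m₀ ≤ b := le_trans (hm₀.1 ⟨hdM, hcd⟩) hdb
  exact (Set.eq_empty_iff_forall_notMem.1 part1 b) ⟨hb, this, le_top⟩
end

section
/- Let M be a maximal sublattice of a finite lattice L with complement C = L \ M, let c₁,…,c_k be all the minimal elements of C, let mᵢ = ⋀{m ∈ M : m > cᵢ}, and let m₀ = ⋀ᵢ mᵢ. Then either C ⊆ [m₀, 1] or C ∩ [m₀, 1] = ∅; in the latter case C is convex. -/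
variable {L : Type*}

theorem stmt6 [Lattice L] [Fintype L] [BoundedOrder L] (M : Set L)
    (hM : IsMaxSublattice M)
    (cs : Finset L) (hcs : ∀ c, c ∈ cs ↔ (c ∈ Mᶜ ∧ ∀ b ∈ Mᶜ, b ≤ c → b = c))
    (m : L → L)
    (hm : ∀ c ∈ cs, {x | x ∈ M ∧ c < x}.Nonempty ∧ IsGLB {x | x ∈ M ∧ c < x} (m c))
    (m₀ : L) (hm₀ : IsGLB (m '' ↑cs) m₀) :
    Mᶜ ⊆ Set.Icc m₀ ⊤ ∨
      (Mᶜ ∩ Set.Icc m₀ ⊤ = ∅ ∧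
        ∀ a ∈ Mᶜ, ∀ b ∈ Mᶜ, ∀ d, a ≤ d → d ≤ b → d ∈ Mᶜ) := by
  classical
  -- Lemma B: any element of M lying above some element of the complement is ≥ m₀.
  have lemB : ∀ y ∈ M, ∀ a ∈ Mᶜ, a ≤ y → m₀ ≤ y := by
    intro y hy a ha hay
    obtain ⟨c, hc, hcmin⟩ := Finset.exists_minimal
      (s := Finset.univ.filter (fun z => z ∈ Mᶜ ∧ z ≤ a)) ⟨a, by simp only [Finset.mem_filter, Finset.mem_univ, true_and]; exact ⟨ha, le_rfl⟩⟩
    simp only [Finset.mem_filter, Finset.mem_univ, true_and] at hc hcmin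
    have hccs : c ∈ cs := by
      rw [hcs]
      refine ⟨hc.1, fun b hb hbc => ?_⟩
      by_contra hne
      exact hne (le_antisymm hbc (hcmin ⟨hb, hbc.trans hc.2⟩ hbc))
    have hcy : c < y :=
      lt_of_le_of_ne (hc.2.trans hay) (by rintro rfl; exact hc.1 hy)
    have h1 : m c ≤ y := (hm c hccs).2.1 ⟨hy, hcy⟩
    have h2 : m₀ ≤ m c := hm₀.1 ⟨c, hccs, rfl⟩
    exact h2.trans h1
  by_cases hE : ∃ d, d ∈ Mᶜ ∧ m₀ ≤ d
  · left
    obtain ⟨d, hd, hdm⟩ := hE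
    set S : Set L := M ∪ {x | x ∈ Mᶜ ∧ m₀ ≤ x} with hSdef
    have hSsub : IsSublattice S := by
      constructor
      · rintro x hx y hy
        by_cases h : x ⊔ y ∈ M
        · exact Or.inl h
        · refine Or.inr ⟨h, ?_⟩
          rcases hx with hx | hx
          · rcases hy with hy | hy
            · exact absurd (hM.1.supClosed hx hy) h
            · exact hy.2.trans le_sup_right
          · exact hx.2.trans le_sup_left
      · rintro x hx y hy
        by_cases h : x ⊓ y ∈ M
        · exact Or.inl h
        · refine Or.inr ⟨h, ?_⟩
          have hx' : m₀ ≤ x := by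
            rcases hx with hx | hx
            · exact lemB x hx _ h inf_le_left
            · exact hx.2
          have hy' : m₀ ≤ y := by
            rcases hy with hy | hy
            · exact lemB y hy _ h inf_le_right
            · exact hy.2
          exact le_inf hx' hy'
    have hMS : M ⊆ S := Set.subset_union_left
    have hneq : S ≠ M := by
      intro h
      have hdS : d ∈ S := Or.inr ⟨hd, hdm⟩
      rw [h] at hdS
      exact hd hdS
    have hSuniv : S = Set.univ := by
      by_contra h
      exact hneq (hM.2.2 S hSsub hMS h)
    intro x hx
    have hxS : x ∈ S := hSuniv ▸ Set.mem_univ x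
    rcases hxS with h | h
    · exact absurd h hx
    · exact ⟨h.2, le_top⟩
  · right
    push_neg at hE
    constructor
    · ext x
      simp only [Set.mem_inter_iff, Set.mem_Icc, Set.mem_empty_iff_false, iff_false]
      rintro ⟨hx, hx1, -⟩
      exact hE x hx hx1
    · intro a ha b hb y hay hyb
      by_contra hy
      have hyM : y ∈ M := not_not.mp hy
      exact hE b hb ((lemB y hyM a ha hay).trans hyb)
end

section
/- Suppose C is the complement of a maximal sublattice M of a finite lattice L, |C| ≥ 2, and C has a greatest element a. Then the element m = ⋁{x ∈ M : x < a} is a subcover of a (i.e., m ≺ a). -/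
variable {L : Type*}

theorem stmt8 [Lattice L] [Fintype L] (M : Set L) (hM : IsMaxSublattice M)
    (hcard : 2 ≤ (Mᶜ : Set L).ncard)
    (a : L) (ha : a ∈ Mᶜ) (hgr : ∀ c ∈ Mᶜ, c ≤ a)
    (m : L) (hne : {x | x ∈ M ∧ x < a}.Nonempty)
    (hm : IsLUB {x | x ∈ M ∧ x < a} m) : m ⋖ a := by
  classical
  obtain ⟨hsub, hMuniv, hmax⟩ := hM
  have haM : a ∉ M := ha
  -- m ∈ M
  have hsfin : {x | x ∈ M ∧ x < a}.Finite := Set.toFinite _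
  have htne : hsfin.toFinset.Nonempty := by
    rw [Set.Finite.toFinset_nonempty]; exact hne
  have hmM : m ∈ M := by
    have h1 : hsfin.toFinset.sup' htne id ≤ m :=
      Finset.sup'_le _ _ fun x hx => hm.1 (hsfin.mem_toFinset.mp hx)
    have h2 : m ≤ hsfin.toFinset.sup' htne id :=
      hm.2 fun x hx => Finset.le_sup' id (hsfin.mem_toFinset.mpr hx)
    have hEq : m = hsfin.toFinset.sup' htne id := le_antisymm h2 h1
    rw [hEq]
    exact hsub.supClosed.finsetSup'_mem htne fun x hx =>
      (hsfin.mem_toFinset.mp hx).1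
  have hma : m < a :=
    lt_of_le_of_ne (hm.2 fun x hx => hx.2.le) (fun h => haM (h ▸ hmM))
  refine ⟨hma, fun b hmb hba => ?_⟩
  have hbM : b ∉ M := fun hb => absurd (hm.1 ⟨hb, hba⟩) (not_le_of_gt hmb)
  -- T = M ∪ Iic b is a sublattice
  set T : Set L := M ∪ Set.Iic b with hT
  have hTsub : IsSublattice T := by
    constructor
    · rintro x (hx | hx) y (hy | hy)
      · exact Or.inl (hsub.supClosed hx hy)
      · by_cases h : x ⊔ y ∈ M
        · exact Or.inl h
        · refine Or.inr ?_
          have hxa : x ≤ a := le_trans le_sup_left (hgr _ h)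
          have hxm : x ≤ m := hm.1 ⟨hx, lt_of_le_of_ne hxa fun h' => haM (h' ▸ hx)⟩
          exact sup_le (hxm.trans hmb.le) hy
      · by_cases h : x ⊔ y ∈ M
        · exact Or.inl h
        · refine Or.inr ?_
          have hya : y ≤ a := le_trans le_sup_right (hgr _ h)
          have hym : y ≤ m := hm.1 ⟨hy, lt_of_le_of_ne hya fun h' => haM (h' ▸ hy)⟩
          exact sup_le hx (hym.trans hmb.le)
      · exact Or.inr (sup_le hx hy)
    · rintro x (hx | hx) y (hy | hy)
      · exact Or.inl (hsub.infClosed hx hy)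
      · exact Or.inr (le_trans inf_le_right hy)
      · exact Or.inr (le_trans inf_le_left hx)
      · exact Or.inr (le_trans inf_le_left hx)
  have haT : a ∉ T := by
    rintro (h | h)
    · exact haM h
    · exact absurd (lt_of_le_of_lt h hba) (lt_irrefl a)
  have hTM : T = M :=
    hmax T hTsub (fun x hx => Or.inl hx) fun h => haT (h ▸ Set.mem_univ a)
  exact hbM (hTM ▸ (Or.inr le_rfl : b ∈ T))
end

section
/- Let L be a finite join-semidistributive lattice and suppose y = ⋁_{i=1}^n dᵢ where each dᵢ = ⋀_{j=1}^{kᵢ} aᵢʲ. If there is z ∈ L such that for every choice (j₁,…,j_n) with 1 ≤ jᵢ ≤ kᵢ we have ⋁_{i=1}^n aᵢ^{jᵢ} = z, then z = y. -/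
variable {L : Type*}

private lemma lemA [Lattice L]
    (hSD : ∀ x y z : L, x ⊔ y = x ⊔ z → x ⊔ (y ⊓ z) = x ⊔ y)
    {β : Type*} (s : Finset β) (hs : s.Nonempty) (f : β → L) (x z : L)
    (h : ∀ b ∈ s, x ⊔ f b = z) : x ⊔ s.inf' hs f = z := by
  induction hs using Finset.Nonempty.cons_induction with
  | singleton b => simpa using h b (by simp)
  | cons c t hc ht ih =>
    rw [Finset.inf'_cons ht]
    have h1 : x ⊔ f c = z := h c (by simp)
    have h2 : x ⊔ t.inf' ht f = z := ih (fun b hb => h b (Finset.mem_cons_of_mem hb))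
    have := hSD x (f c) (t.inf' ht f) (h1.trans h2.symm)
    rw [this, h1]

private lemma lemSup [Lattice L] {ι : Type*} (s : Finset ι) (hs : s.Nonempty)
    (f g : ι → L) (m : ι) (hm : m ∈ s) (u : L)
    (hfg : ∀ i ∈ s, i ≠ m → f i = g i) (hfm : f m = g m ⊔ u) :
    s.sup' hs f = s.sup' hs g ⊔ u := by
  apply le_antisymm
  · apply Finset.sup'_le
    intro i hi
    by_cases hi' : i = m
    · subst hi'; rw [hfm]
      exact sup_le_sup_right (Finset.le_sup' g hi) u
    · rw [hfg i hi hi']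
      exact le_sup_of_le_left (Finset.le_sup' g hi)
  · apply sup_le
    · apply Finset.sup'_le
      intro i hi
      by_cases hi' : i = m
      · subst hi'
        exact le_trans (by rw [hfm]; exact le_sup_left) (Finset.le_sup' f hi)
      · rw [← hfg i hi hi']; exact Finset.le_sup' f hi
    · exact le_trans (by rw [hfm]; exact le_sup_right) (Finset.le_sup' f hm)

theorem stmt10 [Lattice L] [Fintype L]
    (hSD : ∀ x y z : L, x ⊔ y = x ⊔ z → x ⊔ (y ⊓ z) = x ⊔ y)
    {n : ℕ} (hn : 0 < n) (k : Fin n → ℕ) (hk : ∀ i, 0 < k i)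
    (a : (i : Fin n) → Fin (k i) → L) (y z : L)
    (hy : y = Finset.univ.sup' (Finset.univ_nonempty_iff.2 ⟨⟨0, hn⟩⟩)
      (fun i => Finset.univ.inf'
        (Finset.univ_nonempty_iff.2 ⟨⟨0, hk i⟩⟩) (a i)))
    (hz : ∀ j : (i : Fin n) → Fin (k i),
      Finset.univ.sup' (Finset.univ_nonempty_iff.2 ⟨⟨0, hn⟩⟩)
        (fun i => a i (j i)) = z) :
    z = y := by
  set hne : (Finset.univ : Finset (Fin n)).Nonempty :=
    Finset.univ_nonempty_iff.2 ⟨⟨0, hn⟩⟩ with hhne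
  set d : Fin n → L := fun i => Finset.univ.inf'
      (Finset.univ_nonempty_iff.2 ⟨⟨0, hk i⟩⟩) (a i) with hd
  have key : ∀ m : ℕ, ∀ j : (i : Fin n) → Fin (k i),
      Finset.univ.sup' hne
        (fun i => if (i : ℕ) < m then d i else a i (j i)) = z := by
    intro m
    induction m with
    | zero => intro j; simpa using hz j
    | succ m ih =>
      intro j
      by_cases hmn : m < n
      · set M : Fin n := ⟨m, hmn⟩ with hM
        set g : Fin n → L :=
          fun i => if (i : ℕ) < m + 1 then d i else a i (j i) with hg
        have hdM : ∀ b : Fin (k M), d M ≤ a M b := fun b =>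
          Finset.inf'_le (a M) (Finset.mem_univ b)
        have hstep : ∀ b : Fin (k M), Finset.univ.sup' hne g ⊔ a M b = z := by
          intro b
          have hb := ih (Function.update j M b)
          rw [← hb]
          symm
          apply lemSup Finset.univ hne _ g M (Finset.mem_univ M) (a M b)
          · intro i _ hiM
            have hvne : (i : ℕ) ≠ m := fun h => hiM (Fin.ext h)
            by_cases hlt : (i : ℕ) < m
            · simp [hlt, Nat.lt_succ_of_lt hlt, hg, hlt.le]
            · have hlt1 : ¬ (i : ℕ) < m + 1 := by omega
              simp [hlt, hlt1, hg, Function.update_of_ne hiM, show ¬ (i : ℕ) ≤ m by omega]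
          · have h1 : ¬ (m : ℕ) < m := lt_irrefl m
            simp only [hg]
            simp [Fin.val_mk, h1, Function.update_self, show ((M : Fin n) : ℕ) = m from rfl,
              sup_eq_right.2 (hdM b)]
        have hfin : Finset.univ.sup' hne g ⊔ d M = z :=
          lemA hSD Finset.univ (Finset.univ_nonempty_iff.2 ⟨⟨0, hk M⟩⟩)
            (a M) _ z (fun b _ => hstep b)
        have hdle : d M ≤ Finset.univ.sup' hne g := by
          refine le_trans ?_ (Finset.le_sup' g (Finset.mem_univ M))
          simp [hg, show ((M : Fin n) : ℕ) = m from rfl]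
        rw [← hfin, sup_eq_left.2 hdle]
      · have : ∀ i : Fin n, ((i : ℕ) < m + 1) = ((i : ℕ) < m) := by
          intro i
          have := i.isLt
          simp only [eq_iff_iff]
          omega
        simp only [this]
        exact ih j
  have hfinal := key n (fun i => ⟨0, hk i⟩)
  have : ∀ i : Fin n, ((i : ℕ) < n) := fun i => i.isLt
  rw [hy, ← hfinal]
  apply Finset.sup'_congr hne rfl
  intro i _
  simp [this i]
end

section
/- Let L be a finite join-semidistributive lattice, S a sublattice of L, m* a maximal element of S \ {1}, and c ∈ (m*, 1) a coatom of L. Then for any d ∈ L, c belongs to the sublattice generated by S ∪ {d} if and only if m* ∨ d = c. -/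
variable {L : Type*}

private lemma key_stmt11 [Lattice L] [Fintype L] [BoundedOrder L]
    (hSD : ∀ x y z : L, x ⊔ y = x ⊔ z → x ⊔ (y ⊓ z) = x ⊔ y)
    (S : Set L) (hS : IsSublattice S)
    (m' : L) (hm'S : m' ∈ S)
    (hmax : ∀ s ∈ S, s ≠ ⊤ → ¬ m' < s)
    (c : L) (hc : c ⋖ ⊤) (hmc : m' < c) (d : L)
    (M : L) (hMc : M ≤ c) (hm'M : m' ≤ M) (hdM : d ≤ c → d ≤ M) :
    latticeClosure (S ∪ {d}) ⊆ {x | x ≤ c → x ≤ M} := by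
  have hcne : c ≠ ⊤ := hc.1.ne
  apply latticeClosure_min
  · rintro x (hx | hx)
    · intro hxc
      have hsup : x ⊔ m' ∈ S := hS.supClosed hx hm'S
      have hne : x ⊔ m' ≠ ⊤ := by
        intro h
        exact hcne (top_le_iff.mp (h ▸ sup_le hxc hmc.le))
      have := hmax _ hsup hne
      have hle : x ⊔ m' = m' := by
        rcases lt_or_eq_of_le (le_sup_right : m' ≤ x ⊔ m') with h | h
        · exact absurd h this
        · exact h.symm
      exact le_trans (le_trans le_sup_left hle.le) hm'M
    · rcases hx with rfl
      exact hdM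
  · constructor
    · intro x hx y hy hxy
      have hxc : x ≤ c := le_trans le_sup_left hxy
      have hyc : y ≤ c := le_trans le_sup_right hxy
      exact sup_le (hx hxc) (hy hyc)
    · intro x hx y hy hxy
      by_cases hxc : x ≤ c
      · exact le_trans inf_le_left (hx hxc)
      by_cases hyc : y ≤ c
      · exact le_trans inf_le_right (hy hyc)
      · exfalso
        have h1 : c ⊔ x = ⊤ := (lt_or_eq_of_le le_top).resolve_left (hc.2
          (lt_of_le_of_ne le_sup_left (fun h' => hxc (sup_eq_left.mp h'.symm))))
        have h2 : c ⊔ y = ⊤ := (lt_or_eq_of_le le_top).resolve_left (hc.2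
          (lt_of_le_of_ne le_sup_left (fun h' => hyc (sup_eq_left.mp h'.symm))))
        have h3 : c ⊔ (x ⊓ y) = c ⊔ x := hSD c x y (h1.trans h2.symm)
        rw [sup_eq_left.mpr hxy, h1] at h3
        exact hcne h3

theorem stmt11 [Lattice L] [Fintype L] [BoundedOrder L]
    (hSD : ∀ x y z : L, x ⊔ y = x ⊔ z → x ⊔ (y ⊓ z) = x ⊔ y)
    (S : Set L) (hS : IsSublattice S) (htop : ⊤ ∈ S)
    (m' : L) (hm'S : m' ∈ S) (hm'ne : m' ≠ ⊤)
    (hmax : ∀ s ∈ S, s ≠ ⊤ → ¬ m' < s)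
    (c : L) (hc : c ⋖ ⊤) (hmc : m' < c) (d : L) :
    c ∈ latticeClosure (S ∪ {d}) ↔ m' ⊔ d = c := by
  constructor
  · intro hcmem
    by_cases hdc : d ≤ c
    · have hkey := key_stmt11 hSD S hS m' hm'S hmax c hc hmc d (m' ⊔ d)
        (sup_le hmc.le hdc) le_sup_left (fun _ => le_sup_right)
      exact le_antisymm (sup_le hmc.le hdc) (hkey hcmem le_rfl)
    · have hkey := key_stmt11 hSD S hS m' hm'S hmax c hc hmc d m'
        hmc.le le_rfl (fun h => absurd h hdc)
      exact absurd (hkey hcmem le_rfl) (not_le_of_gt hmc)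
  · intro h
    rw [← h]
    exact (isSublattice_latticeClosure).supClosed
      (subset_latticeClosure (Set.mem_union_left _ hm'S))
      (subset_latticeClosure (Set.mem_union_right _ rfl))
end

section
/- Let L be a finite join-semidistributive lattice and M a maximal sublattice of L. If the complement C = L \ M has a greatest element, then C is an interval [d, a] of L. -/
variable {L : Type*}

theorem stmt12 [Lattice L] [Fintype L]
    (hSD : ∀ x y z : L, x ⊔ y = x ⊔ z → x ⊔ (y ⊓ z) = x ⊔ y)
    (M : Set L) (hM : IsMaxSublattice M)
    (a : L) (ha : a ∈ Mᶜ) (hgr : ∀ c ∈ Mᶜ, c ≤ a) :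
    ∃ d : L, Mᶜ = Set.Icc d a := by
  classical
  have haM : a ∉ M := ha
  by_cases hF : ∃ m, m ∈ M ∧ m ≤ a
  · -- main case: some element of M lies below a
    obtain ⟨m0, hm0M, hm0a⟩ := hF
    set F : Finset L := Finset.univ.filter (fun m => m ∈ M ∧ m ≤ a) with hFdef
    have hFne : F.Nonempty := ⟨m0, by simp [hFdef, hm0M, hm0a]⟩
    set s : L := F.sup' hFne id with hsdef
    have hsM : s ∈ M := by
      apply Finset.sup'_induction
      · exact fun x hx y hy => hM.1.supClosed hx hy
      · intro b hb
        exact ((Finset.mem_filter.1 hb).2).1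
    have hsa : s ≤ a := by
      apply Finset.sup'_le
      intro b hb
      exact ((Finset.mem_filter.1 hb).2).2
    have hles : ∀ m, m ∈ M → m ≤ a → m ≤ s := by
      intro m hm hma
      exact Finset.le_sup' id (by simp [hFdef, hm, hma])
    have hsne : s ≠ a := fun h => haM (h ▸ hsM)
    -- k : maximal element of [s, a)
    set K : Finset L := Finset.univ.filter (fun x => s ≤ x ∧ x < a) with hKdef
    have hKne : K.Nonempty := ⟨s, by simp [hKdef, lt_of_le_of_ne hsa hsne]⟩
    obtain ⟨k, hkK, hkmax⟩ := K.exists_maximal hKne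
    have hsk : s ≤ k := ((Finset.mem_filter.1 hkK).2).1
    have hka : k < a := ((Finset.mem_filter.1 hkK).2).2
    have dich : ∀ x, x ≤ a → x ≤ k ∨ k ⊔ x = a := by
      intro x hx
      by_cases h : k ⊔ x = a
      · exact Or.inr h
      · left
        have hmem : k ⊔ x ∈ K := by
          simp only [hKdef, Finset.mem_filter, Finset.mem_univ, true_and]
          exact ⟨hsk.trans le_sup_left, lt_of_le_of_ne (sup_le hka.le hx) h⟩
        have := fun hlt : k < k ⊔ x => lt_irrefl _ (lt_of_lt_of_le hlt (hkmax hmem hlt.le))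
        have hkk : k ⊔ x = k := le_antisymm (by
          by_contra hc
          exact this (lt_of_le_of_ne le_sup_left (fun e => hc (e ▸ le_rfl)))) le_sup_left
        exact le_sup_right.trans hkk.le
    -- j : least y ≤ a with k ⊔ y = a
    set Y : Finset L := Finset.univ.filter (fun y => y ≤ a ∧ k ⊔ y = a) with hYdef
    have haY : a ∈ Y := by simp [hYdef, sup_eq_right.2 hka.le]
    have hYne : Y.Nonempty := ⟨a, haY⟩
    set j : L := Y.inf' hYne id with hjdef
    have hja : j ≤ a := Finset.inf'_le id haY
    have hkj : k ⊔ j = a := by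
      show k ⊔ Y.inf' hYne id = a
      apply Finset.inf'_induction (p := fun y => k ⊔ y = a)
      · intro x hx y hy
        have := hSD k x y (hx.trans hy.symm)
        rw [this, hx]
      · intro b hb
        exact ((Finset.mem_filter.1 hb).2).2
    have hjle : ∀ y, y ≤ a → k ⊔ y = a → j ≤ y := by
      intro y h1 h2
      exact Finset.inf'_le id (by simp [hYdef, h1, h2])
    have hjnk : ¬ j ≤ k := by
      intro h
      have : k ⊔ j = k := sup_eq_left.2 h
      exact hka.ne (hkj ▸ this.symm)
    -- the sublattice S = M ∪ {x : ¬ j ≤ x}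
    set S : Set L := {x : L | x ∈ M ∨ ¬ j ≤ x} with hSdef
    have hjM : ∀ z, z ∈ M → j ≤ z → z ≤ a → False := by
      intro z hz hjz hza
      exact hjnk (hjz.trans ((hles z hz hza).trans hsk))
    have hSsub : IsSublattice S := by
      constructor
      · intro x hx y hy
        by_cases hxy : x ⊔ y ∈ M
        · exact Or.inl hxy
        · right
          intro hj
          have hxya : x ⊔ y ≤ a := hgr _ hxy
          have hxa : x ≤ a := le_sup_left.trans hxya
          have hya : y ≤ a := le_sup_right.trans hxya
          have hkey : ∀ z, z ∈ S → z ≤ a → j ≤ z → False := by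
            intro z hz hza hjz
            rcases hz with hzM | hnj
            · exact hjM z hzM hjz hza
            · exact hnj hjz
          rcases dich x hxa with hxk | hxs
          · rcases dich y hya with hyk | hys
            · exact hjnk (hj.trans (sup_le hxk hyk))
            · exact hkey y hy hya (hjle y hya hys)
          · exact hkey x hx hxa (hjle x hxa hxs)
      · intro x hx y hy
        rcases hx with hxM | hnjx
        · rcases hy with hyM | hnjy
          · exact Or.inl (hM.1.infClosed hxM hyM)
          · exact Or.inr fun h => hnjy (h.trans inf_le_right)
        · exact Or.inr fun h => hnjx (h.trans inf_le_left)
    have hMS : M ⊆ S := fun x hx => Or.inl hx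
    have hSne : S ≠ Set.univ := by
      intro h
      have haS : a ∈ S := h ▸ Set.mem_univ a
      rcases haS with h1 | h2
      · exact haM h1
      · exact h2 hja
    have hSM : S = M := hM.2.2 S hSsub hMS hSne
    have hjall : ∀ x : L, x ∉ M → j ≤ x := by
      intro x hx
      by_contra h
      exact hx (hSM ▸ (Or.inr h : x ∈ S))
    refine ⟨j, ?_⟩
    ext x
    constructor
    · intro hx
      exact ⟨hjall x hx, hgr x hx⟩
    · rintro ⟨h1, h2⟩ hxM
      exact hjM x hxM h1 h2
  · -- no element of M lies below a : C = Icc ⊥ a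
    push_neg at hF
    refine ⟨Finset.univ.inf' ⟨a, Finset.mem_univ a⟩ id, ?_⟩
    ext x
    constructor
    · intro hx
      exact ⟨Finset.inf'_le id (Finset.mem_univ x), hgr x hx⟩
    · rintro ⟨_, h2⟩ hxM
      exact absurd h2 (hF x hxM)
end

section
/- Let L be a finite semidistributive lattice and M a maximal sublattice of L. If the complement C = L \ M has a greatest element or a least element, then C is an interval of L. -/
variable {L : Type*}

theorem key_lemma' [Lattice L] [Fintype L]
    (hSDv : ∀ x y z : L, x ⊔ y = x ⊔ z → x ⊔ (y ⊓ z) = x ⊔ y)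
    (M : Set L) (hsub : IsSublattice M)
    (hmax : ∀ S : Set L, IsSublattice S → M ⊆ S → S ≠ Set.univ → S = M)
    (a : L) (ha : a ∉ M) (hamax : ∀ c, c ∉ M → c ≤ a) :
    ∃ u v : L, Mᶜ = Set.Icc u v := by
  classical
  by_cases hmin : ∀ x : L, x ≤ a → x = a
  · refine ⟨a, a, ?_⟩
    ext x
    simp only [Set.mem_compl_iff, Set.mem_Icc]
    constructor
    · intro hx
      have hxa : x ≤ a := hamax x hx
      have := hmin x hxa
      subst this; exact ⟨le_rfl, le_rfl⟩
    · rintro ⟨h1, h2⟩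
      have : x = a := le_antisymm h2 h1
      subst this; exact ha
  · push_neg at hmin
    obtain ⟨x₀, hx₀a, hx₀ne⟩ := hmin
    -- the set of candidates for p
    set P : Set L := {x | x < a ∧ ∀ m ∈ M, m ≤ a → m ≤ x} with hP
    have hPne : P.Nonempty := by
      by_cases hMa : ∃ m ∈ M, m ≤ a
      · -- s = sup of M ∩ ↓a
        set Q : Set L := {m | m ∈ M ∧ m ≤ a} with hQ
        have hQne : Q.toFinset.Nonempty := by
          obtain ⟨m₀, hm₀, hm₀a⟩ := hMa
          exact ⟨m₀, by simp [hQ, Set.mem_toFinset]; exact ⟨hm₀, hm₀a⟩⟩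
        set s : L := Q.toFinset.sup' hQne id with hs
        have hsM : s ∈ M := by
          apply Finset.sup'_mem M (fun x hx y hy => hsub.supClosed hx hy)
          intro i hi
          rw [Set.mem_toFinset] at hi
          exact hi.1
        have hsa : s ≤ a := by
          apply Finset.sup'_le
          intro i hi
          rw [Set.mem_toFinset] at hi
          exact hi.2
        have hslt : s < a := lt_of_le_of_ne hsa (fun h => ha (h ▸ hsM))
        refine ⟨s, hslt, fun m hm hma => ?_⟩
        have hmQ : m ∈ Q.toFinset := by
          rw [Set.mem_toFinset]; exact ⟨hm, hma⟩
        exact Finset.le_sup' id hmQ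
      · exact ⟨x₀, lt_of_le_of_ne hx₀a hx₀ne,
          fun m hm hma => absurd ⟨m, hm, hma⟩ hMa⟩
    obtain ⟨p, hpP, hpmax⟩ := Set.Finite.exists_maximalFor id P (Set.toFinite P) hPne
    simp only [id] at hpmax
    have hpa : p < a := hpP.1
    have hpbound : ∀ m ∈ M, m ≤ a → m ≤ p := hpP.2
    have hcov : ∀ t, p < t → t ≤ a → t = a := by
      intro t hpt hta
      by_contra hne'
      have htP : t ∈ P := ⟨lt_of_le_of_ne hta hne', fun m hm hma => le_trans (hpbound m hm hma) hpt.le⟩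
      exact absurd (hpmax htP hpt.le) hpt.not_ge
    -- T = {q | p ⊔ q = a}
    set T : Set L := {q | p ⊔ q = a} with hT
    have haT : a ∈ T := by simp [hT, sup_eq_right.mpr hpa.le]
    have hTne : T.toFinset.Nonempty := ⟨a, by rwa [Set.mem_toFinset]⟩
    set j : L := T.toFinset.inf' hTne id with hj
    have hjT : j ∈ T := by
      apply Finset.inf'_mem T
      · intro x hx y hy
        simp only [hT, Set.mem_setOf_eq] at hx hy ⊢
        have := hSDv p x y (hx.trans hy.symm)
        rw [hx] at this; exact this
      · intro i hi; rwa [Set.mem_toFinset] at hi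
    have hjle : ∀ q ∈ T, j ≤ q := by
      intro q hq
      exact Finset.inf'_le id (Set.mem_toFinset.mpr hq)
    have hja : j ≤ a := hjle a haT
    have hjp : ¬ j ≤ p := by
      intro hle
      have : p ⊔ j = p := sup_eq_left.mpr hle
      rw [hjT] at this  -- hjT : p ⊔ j = a
      exact hpa.ne this.symm
    have hkey : ∀ x, x ≤ a → ¬ x ≤ p → j ≤ x := by
      intro x hxa hxp
      have h1 : p < p ⊔ x := lt_of_le_of_ne le_sup_left (fun h => hxp (le_sup_right.trans h.ge))
      have h2 : p ⊔ x = a := hcov _ h1 (sup_le hpa.le hxa)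
      exact hjle x h2
    have hIccC : ∀ x, j ≤ x → x ≤ a → x ∉ M := by
      intro x hjx hxa hxM
      exact hjp (hjx.trans (hpbound x hxM hxa))
    -- the sublattice S = (Icc j a)ᶜ
    have hScompl : (Set.Icc j a)ᶜ = M := by
      apply hmax
      · constructor
        · intro x hx y hy hmem
          simp only [Set.mem_compl_iff, Set.mem_Icc, not_and] at hx hy hmem
          obtain ⟨hjxy, hxya⟩ := hmem
          have hxa : x ≤ a := le_sup_left.trans hxya
          have hya : y ≤ a := le_sup_right.trans hxya
          have hxp : x ≤ p := by
            by_contra hc; exact hx (hkey x hxa hc) hxa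
          have hyp : y ≤ p := by
            by_contra hc; exact hy (hkey y hya hc) hya
          exact hjp (hjxy.trans (sup_le hxp hyp))
        · intro x hx y hy hmem
          simp only [Set.mem_compl_iff, Set.mem_Icc, not_and] at hx hy hmem
          obtain ⟨hjxy, hxya⟩ := hmem
          have hjx : j ≤ x := hjxy.trans inf_le_left
          have hjy : j ≤ y := hjxy.trans inf_le_right
          have hxa : ¬ x ≤ a := hx hjx
          have hya : ¬ y ≤ a := hy hjy
          have hxM : x ∈ M := by
            by_contra hc; exact hxa (hamax x hc)
          have hyM : y ∈ M := by
            by_contra hc; exact hya (hamax y hc)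
          have : x ⊓ y ∈ M := hsub.infClosed hxM hyM
          exact hjp (hjxy.trans (hpbound _ this hxya))
      · intro m hm
        simp only [Set.mem_compl_iff, Set.mem_Icc, not_and]
        intro hjm hma
        exact absurd hm (hIccC m hjm hma)
      · intro h
        have : a ∈ (Set.Icc j a)ᶜ := h ▸ Set.mem_univ a
        exact this ⟨hja, le_rfl⟩
    exact ⟨j, a, by rw [← hScompl, compl_compl]⟩

theorem stmt18 [Lattice L] [Fintype L]
    (hSDv : ∀ x y z : L, x ⊔ y = x ⊔ z → x ⊔ (y ⊓ z) = x ⊔ y)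
    (hSDm : ∀ x y z : L, x ⊓ y = x ⊓ z → x ⊓ (y ⊔ z) = x ⊓ y)
    (M : Set L) (hM : IsMaxSublattice M)
    (h : (∃ a ∈ Mᶜ, ∀ c ∈ Mᶜ, c ≤ a) ∨ (∃ a ∈ Mᶜ, ∀ c ∈ Mᶜ, a ≤ c)) :
    ∃ u v : L, Mᶜ = Set.Icc u v := by
  obtain ⟨hsub, hne, hmax⟩ := hM
  rcases h with ⟨a, haC, hmx⟩ | ⟨a, haC, hmn⟩
  · exact key_lemma' hSDv M hsub hmax a haC (fun c hc => hmx c hc)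
  · let M' : Set Lᵒᵈ := OrderDual.ofDual ⁻¹' M
    have hsub' : IsSublattice M' :=
      ⟨fun x hx y hy => hsub.infClosed hx hy, fun x hx y hy => hsub.supClosed hx hy⟩
    have hmax' : ∀ S : Set Lᵒᵈ, IsSublattice S → M' ⊆ S → S ≠ Set.univ → S = M' := by
      intro S hS hMS hSne
      have hS₀ : IsSublattice (OrderDual.toDual ⁻¹' S : Set L) :=
        ⟨fun x hx y hy => hS.infClosed hx hy, fun x hx y hy => hS.supClosed hx hy⟩
      have h1 : M ⊆ OrderDual.toDual ⁻¹' S := fun x hx => hMS hx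
      have h2 : (OrderDual.toDual ⁻¹' S : Set L) ≠ Set.univ := fun hh =>
        hSne (Set.eq_univ_of_forall fun x =>
          Set.eq_univ_iff_forall.mp hh (OrderDual.ofDual x))
      have h3 := hmax _ hS₀ h1 h2
      ext x
      exact Set.ext_iff.mp h3 (OrderDual.ofDual x)
    have hSDv' : ∀ x y z : Lᵒᵈ, x ⊔ y = x ⊔ z → x ⊔ (y ⊓ z) = x ⊔ y :=
      fun x y z hh => hSDm (OrderDual.ofDual x) (OrderDual.ofDual y) (OrderDual.ofDual z) hh
    have ha' : (OrderDual.toDual a) ∉ M' := haC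
    have hamax' : ∀ c : Lᵒᵈ, c ∉ M' → c ≤ OrderDual.toDual a :=
      fun c hc => hmn (OrderDual.ofDual c) hc
    obtain ⟨u, v, huv⟩ := key_lemma' hSDv' M' hsub' hmax' (OrderDual.toDual a) ha' hamax'
    refine ⟨OrderDual.ofDual v, OrderDual.ofDual u, ?_⟩
    ext x
    have hx := Set.ext_iff.mp huv (OrderDual.toDual x)
    simp only [Set.mem_compl_iff, Set.mem_Icc] at hx ⊢
    exact ⟨fun hxx => ⟨(hx.mp hxx).2, (hx.mp hxx).1⟩, fun hxx => hx.mpr ⟨hxx.2, hxx.1⟩⟩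
end

section
/- Let L be a finite meet-semidistributive lattice in which the number of join-irreducible elements equals the number of meet-irreducible elements. Then L is also join-semidistributive (hence semidistributive), and the map κ sending each join-irreducible j to the greatest element of {u ∈ L : u ≥ j_*, u ≱ j} is a bijection from the join-irreducibles onto the meet-irreducibles. -/
variable {L : Type*}

section Aux

variable {M : Type*} [Lattice M] [Fintype M]

/-- Every sup-irreducible element of a finite lattice has a greatest strictly
smaller element, which is its unique lower cover. -/
private lemma aux_lower {j : M} (hj : SupIrred j) :
    ∃ p, p ⋖ j ∧ ∀ x, x < j → x ≤ p := by
  classical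
  obtain ⟨x0, hx0⟩ := not_isMin_iff.1 hj.1
  have hne : (Finset.univ.filter (· < j)).Nonempty :=
    ⟨x0, Finset.mem_filter.2 ⟨Finset.mem_univ _, hx0⟩⟩
  set p := (Finset.univ.filter (· < j)).sup' hne id with hpdef
  have hub : ∀ x, x < j → x ≤ p := by
    intro x hx
    rw [hpdef]
    have hxmem : x ∈ Finset.univ.filter (· < j) := by
      simp only [Finset.mem_filter, Finset.mem_univ, true_and]
      exact hx
    exact Finset.le_sup' (f := id) hxmem
  have hplt : p < j := by
    rw [hpdef]
    refine Finset.sup'_induction (p := (· < j)) hne id ?_ ?_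
    · intro a ha b hb
      rcases eq_or_lt_of_le (sup_le ha.le hb.le) with h | h
      · rcases hj.2 h with h' | h'
        · exact absurd h' ha.ne
        · exact absurd h' hb.ne
      · exact h
    · intro b hb
      exact (Finset.mem_filter.1 hb).2
  exact ⟨p, ⟨hplt, fun c hc hcj => (hub c hcj).not_gt hc⟩, hub⟩

/-- A minimal element of `{y | ¬ y ≤ m}` below `x` is sup-irreducible. -/
private lemma aux_min {x m : M} (hxm : ¬ x ≤ m) :
    ∃ j, SupIrred j ∧ j ≤ x ∧ ¬ j ≤ m ∧ ∀ y, y < j → y ≤ m := by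
  obtain ⟨j, hjx, hjmin⟩ := exists_minimal_le_of_wellFoundedLT (fun y => ¬ y ≤ m) x hxm
  have hjm : ¬ j ≤ m := hjmin.1
  have hmin : ∀ y, y < j → y ≤ m := by
    intro y hy
    by_contra hym
    exact hy.not_ge (hjmin.2 hym hy.le)
  refine ⟨j, ⟨?_, ?_⟩, hjx, hjm, hmin⟩
  · intro hIsMin
    exact hjm ((hIsMin (inf_le_left (b := m))).trans inf_le_right)
  · intro b c hbc
    by_contra hcon
    push_neg at hcon
    have hb : b < j := lt_of_le_of_ne (hbc ▸ le_sup_left) hcon.1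
    have hc : c < j := lt_of_le_of_ne (hbc ▸ le_sup_right) hcon.2
    exact hjm (hbc ▸ sup_le (hmin b hb) (hmin c hc))

/-- Meet-semidistributivity gives the greatest element of `K(j)`. -/
private lemma aux_kappa (hSDm : ∀ x y z : M, x ⊓ y = x ⊓ z → x ⊓ (y ⊔ z) = x ⊓ y)
    {j p : M} (hpj : p ⋖ j) :
    ∃ k, IsGreatest {u : M | p ≤ u ∧ ¬ j ≤ u} k := by
  classical
  have hpmem : p ≤ p ∧ ¬ j ≤ p := ⟨le_rfl, fun h => hpj.lt.not_ge h⟩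
  have hne : (Finset.univ.filter (fun u => p ≤ u ∧ ¬ j ≤ u)).Nonempty :=
    ⟨p, Finset.mem_filter.2 ⟨Finset.mem_univ _, hpmem⟩⟩
  have key : ∀ u, (p ≤ u ∧ ¬ j ≤ u) → j ⊓ u = p := by
    rintro u ⟨h1, h2⟩
    have hge : p ≤ j ⊓ u := le_inf hpj.lt.le h1
    rcases eq_or_lt_of_le hge with h | h
    · exact h.symm
    · have hlt : j ⊓ u < j :=
        lt_of_le_of_ne inf_le_left (fun he => h2 (inf_eq_left.1 he))
      exact absurd hlt (hpj.2 h)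
  have hclosed : ∀ u, (p ≤ u ∧ ¬ j ≤ u) → ∀ v, (p ≤ v ∧ ¬ j ≤ v) →
      (p ≤ u ⊔ v ∧ ¬ j ≤ u ⊔ v) := by
    intro u hu v hv
    refine ⟨hu.1.trans le_sup_left, fun hjle => ?_⟩
    have h1 : j ⊓ (u ⊔ v) = j ⊓ u := hSDm j u v (by rw [key u hu, key v hv])
    rw [inf_eq_left.2 hjle, key u hu] at h1
    exact hpj.lt.ne' h1
  refine ⟨(Finset.univ.filter (fun u => p ≤ u ∧ ¬ j ≤ u)).sup' hne id, ?_, ?_⟩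
  · exact Finset.sup'_induction hne id hclosed
      (fun b hb => (Finset.mem_filter.1 hb).2)
  · intro u hu
    exact Finset.le_sup' (f := id) (Finset.mem_filter.2 ⟨Finset.mem_univ _, hu⟩)

/-- The greatest element of `K(j)` is inf-irreducible. -/
private lemma aux_infIrred {j p k : M} (hpj : p ⋖ j)
    (hk : IsGreatest {u : M | p ≤ u ∧ ¬ j ≤ u} k) : InfIrred k := by
  constructor
  · intro hmax
    exact hk.1.2 (le_sup_right.trans (hmax (le_sup_left : k ≤ k ⊔ j)))
  · intro b c hbc
    by_contra hcon
    push_neg at hcon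
    have hb : k < b := lt_of_le_of_ne (hbc ▸ inf_le_left) (Ne.symm hcon.1)
    have hc : k < c := lt_of_le_of_ne (hbc ▸ inf_le_right) (Ne.symm hcon.2)
    have hjb : j ≤ b := by
      by_contra hjb
      exact hb.not_ge (hk.2 ⟨hk.1.1.trans hb.le, hjb⟩)
    have hjc : j ≤ c := by
      by_contra hjc
      exact hc.not_ge (hk.2 ⟨hk.1.1.trans hc.le, hjc⟩)
    exact hk.1.2 (hbc ▸ le_inf hjb hjc)

/-- The key lemma: if `m` is inf-irreducible with upper cover `q`, `x ≤ q`,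
`x ≰ m`, then a suitable sup-irreducible `j ≤ x` has `κ(j) = m`. -/
private lemma aux_L5 (hSDm : ∀ x y z : M, x ⊓ y = x ⊓ z → x ⊓ (y ⊔ z) = x ⊓ y)
    {m q x : M} (hmq : m ⋖ q) (hq : ∀ y, m < y → q ≤ y)
    (hx : x ≤ q) (hxm : ¬ x ≤ m) :
    ∃ j, SupIrred j ∧ j ≤ x ∧ ¬ j ≤ m ∧
      ∀ p, p ⋖ j → IsGreatest {u : M | p ≤ u ∧ ¬ j ≤ u} m := by
  obtain ⟨j, hj, hjx, hjm, hmin⟩ := aux_min hxm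
  refine ⟨j, hj, hjx, hjm, fun p hpj => ?_⟩
  obtain ⟨k, hk⟩ := aux_kappa hSDm hpj
  have hpm : p ≤ m := hmin p hpj.lt
  have hmK : m ∈ {u : M | p ≤ u ∧ ¬ j ≤ u} := ⟨hpm, hjm⟩
  have hmk : m ≤ k := hk.2 hmK
  have hkm : k = m := by
    rcases eq_or_lt_of_le hmk with h | h
    · exact h.symm
    · exact absurd (hjx.trans (hx.trans (hq k h))) hk.1.2
  exact hkm ▸ hk

/-- Dual of `aux_lower`. -/
private lemma aux_upper {m : M} (hm : InfIrred m) :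
    ∃ q, m ⋖ q ∧ ∀ x, m < x → q ≤ x := by
  obtain ⟨p, hp, hub⟩ := aux_lower (M := Mᵒᵈ) (j := OrderDual.toDual m)
    (supIrred_toDual.2 hm)
  refine ⟨OrderDual.ofDual p, ?_, ?_⟩
  · exact (toDual_covBy_toDual_iff (a := m) (b := OrderDual.ofDual p)).1 hp
  · intro x hx
    exact hub (OrderDual.toDual x) (by exact_mod_cast hx)

/-- Dual of `aux_min`. -/
private lemma aux_min_dual {x w : M} (hxw : ¬ x ≤ w) :
    ∃ m, InfIrred m ∧ w ≤ m ∧ ¬ x ≤ m ∧ ∀ y, m < y → x ≤ y := by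
  obtain ⟨j, hj, hjx, hjm, hmin⟩ := aux_min (M := Mᵒᵈ)
    (x := OrderDual.toDual w) (m := OrderDual.toDual x) (by exact hxw)
  exact ⟨OrderDual.ofDual j, supIrred_ofDual.1 hj, hjx, hjm,
    fun y hy => hmin (OrderDual.toDual y) hy⟩

end Aux

theorem stmt19 [Lattice L] [Fintype L]
    (hSDm : ∀ x y z : L, x ⊓ y = x ⊓ z → x ⊓ (y ⊔ z) = x ⊓ y)
    (hcard : {a : L | SupIrred a}.ncard = {a : L | InfIrred a}.ncard) :
    (∀ x y z : L, x ⊔ y = x ⊔ z → x ⊔ (y ⊓ z) = x ⊔ y) ∧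
    ∃ κ : {j : L // SupIrred j} → {m : L // InfIrred m},
      Function.Bijective κ ∧
      ∀ (j : {j : L // SupIrred j}) (p : L), p ⋖ j.1 →
        IsGreatest {u : L | p ≤ u ∧ ¬ j.1 ≤ u} (κ j).1 := by
  classical
  have hF : ∀ j : {j : L // SupIrred j}, ∃ k : {m : L // InfIrred m},
      ∀ p, p ⋖ j.1 → IsGreatest {u : L | p ≤ u ∧ ¬ j.1 ≤ u} k.1 := by
    rintro ⟨j, hj⟩
    obtain ⟨p0, hp0, hp0max⟩ := aux_lower hj
    obtain ⟨k, hk⟩ := aux_kappa hSDm hp0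
    refine ⟨⟨k, aux_infIrred hp0 hk⟩, ?_⟩
    intro p hp
    have hpp0 : p = p0 := by
      rcases eq_or_lt_of_le (hp0max p hp.lt) with h | h
      · exact h
      · exact absurd hp0.lt (hp.2 h)
    rw [hpp0]
    exact hk
  choose F hFspec using hF
  -- `F j = m` whenever the key lemma applies
  have hFeq : ∀ (j : L) (hj : SupIrred j) (m : L),
      (∀ p, p ⋖ j → IsGreatest {u : L | p ≤ u ∧ ¬ j ≤ u} m) →
      (F ⟨j, hj⟩).1 = m := by
    intro j hj m hm
    obtain ⟨p0, hp0, _⟩ := aux_lower hj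
    exact (hFspec ⟨j, hj⟩ p0 hp0).unique (hm p0 hp0)
  have hsurj : Function.Surjective F := by
    rintro ⟨m, hm⟩
    obtain ⟨q, hmq, hq⟩ := aux_upper hm
    obtain ⟨j, hj, _, _, hjk⟩ :=
      aux_L5 hSDm hmq hq (le_refl q) (fun h => hmq.lt.not_ge h)
    exact ⟨⟨j, hj⟩, Subtype.ext (hFeq j hj m hjk)⟩
  have hcard' : Fintype.card {j : L // SupIrred j} = Fintype.card {m : L // InfIrred m} := by
    rw [Set.ncard_eq_toFinset_card', Set.ncard_eq_toFinset_card',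
      Set.toFinset_card, Set.toFinset_card] at hcard
    exact (Fintype.card_congr (Equiv.subtypeEquivRight (fun _ => Iff.rfl))).trans
      (hcard.trans (Fintype.card_congr (Equiv.subtypeEquivRight (fun _ => Iff.rfl))))
  have hbij : Function.Bijective F :=
    (Fintype.bijective_iff_surjective_and_card F).2 ⟨hsurj, hcard'⟩
  refine ⟨?_, F, hbij, fun j p hp => hFspec j p hp⟩
  intro a b c habc
  have h1 : a ⊔ (b ⊓ c) ≤ a ⊔ b := sup_le_sup_left inf_le_left a
  refine le_antisymm h1 ?_
  by_contra h'
  obtain ⟨m, hm, hwm, hbm, hmmax⟩ := aux_min_dual h'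
  obtain ⟨q, hmq, hq⟩ := aux_upper hm
  have habq : a ⊔ b ≤ q := hmmax q hmq.lt
  have ham : a ≤ m := le_sup_left.trans hwm
  have hbm' : ¬ b ≤ m := fun hb => hbm (sup_le ham hb)
  have hcm' : ¬ c ≤ m := fun hc => hbm (habc ▸ sup_le ham hc)
  have hbq : b ≤ q := le_sup_right.trans habq
  have hcq : c ≤ q := le_sup_right.trans (by rw [← habc]; exact habq)
  obtain ⟨j0, hj0, _, hj0m, hj0k⟩ :=
    aux_L5 hSDm hmq hq (le_refl q) (fun hh => hmq.lt.not_ge hh)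
  obtain ⟨jb, hjb, hjbb, _, hjbk⟩ := aux_L5 hSDm hmq hq hbq hbm'
  obtain ⟨jc, hjc, hjcc, _, hjck⟩ := aux_L5 hSDm hmq hq hcq hcm'
  have e0 := hFeq j0 hj0 m hj0k
  have eb := hFeq jb hjb m hjbk
  have ec := hFeq jc hjc m hjck
  have h0b : j0 = jb := by
    have := hbij.injective (a₁ := ⟨j0, hj0⟩) (a₂ := ⟨jb, hjb⟩)
      (Subtype.ext (e0.trans eb.symm))
    exact congrArg Subtype.val this
  have h0c : j0 = jc := by
    have := hbij.injective (a₁ := ⟨j0, hj0⟩) (a₂ := ⟨jc, hjc⟩)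
      (Subtype.ext (e0.trans ec.symm))
    exact congrArg Subtype.val this
  have : j0 ≤ m := (le_inf (h0b ▸ hjbb) (h0c ▸ hjcc)).trans (le_sup_right.trans hwm)
  exact hj0m this
end
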